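/- The connecting operator satisfies (C^T f, g)_{L²(0,T)} = (u^f(T), u^g(T))_{ℂ^N} for all f, g ∈ L²(0,T), and C^T is a nonnegative self-adjoint operator whose range equals F_1^T = span{S_k(T-·)}_{k=1}^N. -/

import Mathlib

/-!
The kernel of `C^T` has rank `N`: with the moments `aₖ(f) = ∫₀ᵀ Sₖ(T-τ) f(τ) dτ`,
`C^T f = ∑ₖ ρₖ⁻¹ aₖ(f) Sₖ(T-·)` and `u^f(T) = ∑ₖ ρₖ⁻¹ aₖ(f) φₖ`. Orthogonality of the `φₖ` turns
both `(C^T f, g)` and `(u^f(T), u^g(T))` into `∑ₖ ρₖ⁻¹ aₖ(f) conj aₖ(g)`, whence positivity and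
symmetry. For the range, `C^T (∑ⱼ bⱼ Sⱼ(T-·)) = ∑ₖ ρₖ⁻¹ (G b)ₖ Sₖ(T-·)` with `G` the Gram matrix
of the `Sₖ(T-·)` on `(0, T)`. It is nonsingular because these functions are linearly independent:
if `∑ₖ cₖ Sₖ` vanishes near `t₀`, so do all its derivatives, which alternate between
`∑ₖ (-λₖ)ᵐ cₖ Sₖ` and `∑ₖ (-λₖ)ᵐ cₖ Cₖ` with `Cₖ = ∂ₜSₖ`; at `t₀` these are Vandermonde systems
in the distinct `-λₖ`, so `cₖ Sₖ(t₀) = cₖ Cₖ(t₀) = 0`, and `Cₖ² + λₖ Sₖ² = 1` forces `cₖ = 0`.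
-/

open MeasureTheory

/-- The wave kernel `S(t,λ)`: `sin(√λ t)/√λ` for `λ > 0`,
`sinh(√(-λ) t)/√(-λ)` for `λ < 0`, and `t` for `λ = 0`. -/
noncomputable def S (t lam : ℝ) : ℝ :=
  if 0 < lam then Real.sin (Real.sqrt lam * t) / Real.sqrt lam
  else if lam < 0 then Real.sinh (Real.sqrt (-lam) * t) / Real.sqrt (-lam)
  else t

open Filter Topology
open scoped ComplexConjugate

noncomputable def C (t lam : ℝ) : ℝ :=
  if 0 < lam then Real.cos (Real.sqrt lam * t)
  else if lam < 0 then Real.cosh (Real.sqrt (-lam) * t)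
  else 1

section WaveKernel

variable {s : ℝ}

theorem S_sq (hs : 0 < s) (t : ℝ) : S t (s ^ 2) = Real.sin (s * t) / s := by
  simp [S, hs.ne', hs.le]

theorem C_sq (hs : 0 < s) (t : ℝ) : C t (s ^ 2) = Real.cos (s * t) := by
  simp [C, hs.ne', hs.le]

theorem S_neg_sq (hs : 0 < s) (t : ℝ) : S t (-s ^ 2) = Real.sinh (s * t) / s := by
  simp [S, pow_pos hs 2, hs.le]

theorem C_neg_sq (hs : 0 < s) (t : ℝ) : C t (-s ^ 2) = Real.cosh (s * t) := by
  simp [C, pow_pos hs 2, hs.le]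

theorem exists_eq_sq_or_eq_zero_or_eq_neg_sq (lam : ℝ) :
    (∃ s, 0 < s ∧ lam = s ^ 2) ∨ lam = 0 ∨ ∃ s, 0 < s ∧ lam = -s ^ 2 := by
  rcases lt_trichotomy lam 0 with h | h | h
  · refine Or.inr <| Or.inr ⟨√(-lam), Real.sqrt_pos.2 (neg_pos.2 h), ?_⟩
    rw [Real.sq_sqrt (neg_pos.2 h).le, neg_neg]
  · exact Or.inr (Or.inl h)
  · exact Or.inl ⟨√lam, by positivity, (Real.sq_sqrt h.le).symm⟩

theorem hasDerivAt_S (lam t : ℝ) : HasDerivAt (fun u => S u lam) (C t lam) t := by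
  rcases exists_eq_sq_or_eq_zero_or_eq_neg_sq lam with ⟨s, hs, rfl⟩ | rfl | ⟨s, hs, rfl⟩
  · simp only [S_sq hs, C_sq hs]
    have h := (((hasDerivAt_id' t).const_mul s).sin).div_const s
    rwa [mul_one, mul_div_cancel_right₀ _ hs.ne'] at h
  · simpa [S, C] using hasDerivAt_id' t
  · simp only [S_neg_sq hs, C_neg_sq hs]
    have h := (((hasDerivAt_id' t).const_mul s).sinh).div_const s
    rwa [mul_one, mul_div_cancel_right₀ _ hs.ne'] at h

theorem hasDerivAt_C (lam t : ℝ) : HasDerivAt (fun u => C u lam) (-lam * S t lam) t := by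
  rcases exists_eq_sq_or_eq_zero_or_eq_neg_sq lam with ⟨s, hs, rfl⟩ | rfl | ⟨s, hs, rfl⟩
  · simp only [S_sq hs, C_sq hs]
    convert ((hasDerivAt_id' t).const_mul s).cos using 1
    field_simp
  · simpa [S, C] using hasDerivAt_const t (1 : ℝ)
  · simp only [S_neg_sq hs, C_neg_sq hs]
    convert ((hasDerivAt_id' t).const_mul s).cosh using 1
    field_simp

theorem C_sq_add_mul_S_sq (lam t : ℝ) : C t lam ^ 2 + lam * S t lam ^ 2 = 1 := by
  rcases exists_eq_sq_or_eq_zero_or_eq_neg_sq lam with ⟨s, hs, rfl⟩ | rfl | ⟨s, hs, rfl⟩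
  · rw [S_sq hs, C_sq hs]
    field_simp
    linear_combination Real.cos_sq_add_sin_sq (s * t)
  · simp [C]
  · rw [S_neg_sq hs, C_neg_sq hs]
    field_simp
    linear_combination Real.cosh_sq_sub_sinh_sq (s * t)

theorem continuous_S (lam : ℝ) : Continuous fun t => S t lam :=
  continuous_iff_continuousAt.2 fun t => (hasDerivAt_S lam t).continuousAt

end WaveKernel

section Independence

variable {ι : Type*} [Fintype ι] {lam : ι → ℝ} {t₀ : ℝ} {c : ι → ℝ}

theorem hasDerivAt_sum_mul_S (c : ι → ℝ) (t : ℝ) :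
    HasDerivAt (fun u => ∑ k, c k * S u (lam k)) (∑ k, c k * C t (lam k)) t :=
  HasDerivAt.fun_sum fun k _ => (hasDerivAt_S (lam k) t).const_mul (c k)

theorem hasDerivAt_sum_mul_C (c : ι → ℝ) (t : ℝ) :
    HasDerivAt (fun u => ∑ k, c k * C u (lam k)) (∑ k, c k * -lam k * S t (lam k)) t := by
  simpa only [mul_assoc] using
    HasDerivAt.fun_sum fun k _ => (hasDerivAt_C (lam k) t).const_mul (c k)

theorem eventually_sum_mul_C_eq_zero (h : ∀ᶠ t in 𝓝 t₀, ∑ k, c k * S t (lam k) = 0) :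
    ∀ᶠ t in 𝓝 t₀, ∑ k, c k * C t (lam k) = 0 := by
  filter_upwards [EventuallyEq.deriv (f := fun _ => (0 : ℝ)) h] with t ht
  rwa [(hasDerivAt_sum_mul_S c t).deriv, deriv_const] at ht

theorem eventually_sum_mul_neg_mul_S_eq_zero (h : ∀ᶠ t in 𝓝 t₀, ∑ k, c k * C t (lam k) = 0) :
    ∀ᶠ t in 𝓝 t₀, ∑ k, c k * -lam k * S t (lam k) = 0 := by
  filter_upwards [EventuallyEq.deriv (f := fun _ => (0 : ℝ)) h] with t ht
  rwa [(hasDerivAt_sum_mul_C c t).deriv, deriv_const] at ht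

theorem eventually_sum_mul_pow_mul_S_eq_zero (h : ∀ᶠ t in 𝓝 t₀, ∑ k, c k * S t (lam k) = 0)
    (m : ℕ) : ∀ᶠ t in 𝓝 t₀, ∑ k, c k * (-lam k) ^ m * S t (lam k) = 0 := by
  induction m with
  | zero => simpa using h
  | succ m ih =>
    simpa only [pow_succ, mul_assoc] using
      eventually_sum_mul_neg_mul_S_eq_zero (eventually_sum_mul_C_eq_zero ih)

theorem eq_zero_of_eventually_sum_mul_S_eq_zero {n : ℕ} {lam : Fin n → ℝ}
    (hlam : Function.Injective lam) {c : Fin n → ℝ}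
    (h : ∀ᶠ t in 𝓝 t₀, ∑ k, c k * S t (lam k) = 0) : c = 0 := by
  have hneg : Function.Injective fun k => -lam k := neg_injective.comp hlam
  have hS : (fun k => c k * S t₀ (lam k)) = 0 :=
    Matrix.eq_zero_of_forall_pow_sum_mul_pow_eq_zero hneg fun m => by
      simpa only [mul_right_comm] using (eventually_sum_mul_pow_mul_S_eq_zero h m).self_of_nhds
  have hC : (fun k => c k * C t₀ (lam k)) = 0 :=
    Matrix.eq_zero_of_forall_pow_sum_mul_pow_eq_zero hneg fun m => by
      simpa only [mul_right_comm] using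
        (eventually_sum_mul_C_eq_zero (eventually_sum_mul_pow_mul_S_eq_zero h m)).self_of_nhds
  funext k
  rw [Pi.zero_apply]
  have hSk : c k * S t₀ (lam k) = 0 := congrFun hS k
  have hCk : c k * C t₀ (lam k) = 0 := congrFun hC k
  linear_combination (-c k) * C_sq_add_mul_S_sq (lam k) t₀ + C t₀ (lam k) * hCk
    + lam k * S t₀ (lam k) * hSk

theorem eq_zero_of_sum_mul_S_sub_eq_zero {n : ℕ} {lam : Fin n → ℝ}
    (hlam : Function.Injective lam) {T : ℝ} (hT : 0 < T) {c : Fin n → ℝ}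
    (h : ∀ t ∈ Set.Ioo 0 T, ∑ k, c k * S (T - t) (lam k) = 0) : c = 0 := by
  refine eq_zero_of_eventually_sum_mul_S_eq_zero hlam (t₀ := T / 2) ?_
  filter_upwards [Ioo_mem_nhds (half_pos hT) (half_lt_self hT)] with t ht
  simpa using h (T - t) ⟨by linarith [ht.2], by linarith [ht.1]⟩

end Independence

section FiniteRankIntegrals

open Matrix

variable {ι : Type*} [Fintype ι] {a b : ℝ} {u : ι → ℝ → ℝ}

theorem integral_mul_sum_mul {𝕜 : Type*} [RCLike 𝕜] {v : ℝ → ℝ} (hv : Continuous v)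
    (hu : ∀ k, Continuous (u k)) (c : ι → 𝕜) :
    ∫ t in a..b, (v t : 𝕜) * ∑ j, c j * u j t =
      ∑ j, c j * ((∫ t in a..b, v t * u j t : ℝ) : 𝕜) := by
  simp_rw [Finset.mul_sum]
  rw [intervalIntegral.integral_finsetSum fun j _ =>
    (by fun_prop : Continuous _).intervalIntegrable _ _]
  refine Finset.sum_congr rfl fun j _ => ?_
  rw [← RCLike.intervalIntegral_ofReal, ← intervalIntegral.integral_const_mul]
  congr 1 with t
  push_cast
  ring

theorem integral_sum_mul_sq (hu : ∀ k, Continuous (u k)) (c : ι → ℝ) :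
    ∫ t in a..b, (∑ k, c k * u k t) ^ 2 =
      c ⬝ᵥ (of fun k j => ∫ t in a..b, u k t * u j t) *ᵥ c := by
  have h := fun v (hv : Continuous v) => integral_mul_sum_mul (𝕜 := ℝ) (a := a) (b := b) hv hu c
  simp only [RCLike.ofReal_real_eq_id, id] at h
  simp_rw [sq]
  rw [h _ (by fun_prop)]
  refine Finset.sum_congr rfl fun k _ => ?_
  simp_rw [mul_comm (∑ j, c j * u j _) (u k _)]
  rw [h _ (hu k)]
  exact congrArg _ (Finset.sum_congr rfl fun j _ => mul_comm _ _)

theorem det_gram_ne_zero [DecidableEq ι] (hab : a < b) (hu : ∀ k, Continuous (u k))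
    (hindep : ∀ c : ι → ℝ, (∀ t ∈ Set.Ioo a b, ∑ k, c k * u k t = 0) → c = 0) :
    (of fun k j => ∫ t in a..b, u k t * u j t).det ≠ 0 := by
  intro hdet
  obtain ⟨c, hc0, hGc⟩ := exists_mulVec_eq_zero_iff.2 hdet
  refine hc0 (hindep c fun t ht => ?_)
  by_contra hne
  have hpos : 0 < ∫ t in a..b, (∑ k, c k * u k t) ^ 2 :=
    intervalIntegral.integral_pos hab (by fun_prop) (fun _ _ => sq_nonneg _)
      ⟨t, Set.Ioo_subset_Icc_self ht, by positivity⟩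
  rw [integral_sum_mul_sq hu, hGc, dotProduct_zero] at hpos
  exact hpos.false

theorem exists_integral_mul_sum_eq (hab : a < b) (hu : ∀ k, Continuous (u k))
    (hindep : ∀ c : ι → ℝ, (∀ t ∈ Set.Ioo a b, ∑ k, c k * u k t = 0) → c = 0) (y : ι → ℂ) :
    ∃ c : ι → ℂ, ∀ k, ∫ t in a..b, (u k t : ℂ) * ∑ j, c j * u j t = y k := by
  classical
  set G := of fun k j => ∫ t in a..b, u k t * u j t
  have hG : IsUnit (G.map Complex.ofRealHom) := by
    rw [isUnit_iff_isUnit_det, ← RingHom.mapMatrix_apply, ← RingHom.map_det, isUnit_iff_ne_zero,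
      map_ne_zero]
    exact det_gram_ne_zero hab hu hindep
  obtain ⟨c, hc⟩ := mulVec_surjective_iff_isUnit.2 hG y
  refine ⟨c, fun k => ?_⟩
  have h := integral_mul_sum_mul (𝕜 := ℂ) (a := a) (b := b) (hu k) hu c
  simp only [RCLike.ofReal_eq_complex_ofReal] at h
  rw [h, ← hc]
  simp only [mulVec, dotProduct, G, map_apply, of_apply, Complex.ofRealHom_eq_coe, mul_comm]

theorem integral_sum_kernel_mul (hu : ∀ k, Continuous (u k)) (w : ι → ℂ) {f : ℝ → ℂ}
    (hf : Continuous f) (t : ℝ) :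
    ∫ s in a..b, (∑ k, w k * u k t * u k s) * f s =
      ∑ k, w k * (∫ s in a..b, u k s * f s) * u k t := by
  simp_rw [Finset.sum_mul]
  rw [intervalIntegral.integral_finsetSum fun k _ =>
    (by fun_prop : Continuous _).intervalIntegrable _ _]
  refine Finset.sum_congr rfl fun k _ => ?_
  rw [mul_right_comm, ← intervalIntegral.integral_const_mul]
  exact intervalIntegral.integral_congr fun s _ => by ring

theorem integral_sum_mul_mul_conj (hu : ∀ k, Continuous (u k)) (c : ι → ℂ) {g : ℝ → ℂ}
    (hg : Continuous g) :
    ∫ t in a..b, (∑ k, c k * u k t) * conj (g t) =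
      ∑ k, c k * conj (∫ t in a..b, u k t * g t) := by
  simp_rw [Finset.sum_mul]
  rw [intervalIntegral.integral_finsetSum fun k _ =>
    (by fun_prop : Continuous _).intervalIntegrable _ _]
  refine Finset.sum_congr rfl fun k _ => ?_
  rw [← intervalIntegral.intervalIntegral_conj, ← intervalIntegral.integral_const_mul]
  refine intervalIntegral.integral_congr fun t _ => ?_
  simp only [map_mul, Complex.conj_ofReal]
  ring

end FiniteRankIntegrals

theorem sum_sum_mul_mul_conj_sum_of_orthogonal {ι κ : Type*} [Fintype ι] [Fintype κ]
    [DecidableEq ι] {φ : ι → κ → ℝ} {ρ : ι → ℝ}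
    (horth : ∀ j k, ∑ i, φ j i * φ k i = if j = k then ρ k else 0) (x y : ι → ℂ) :
    ∑ i, (∑ k, x k * φ k i) * conj (∑ k, y k * φ k i) = ∑ k, x k * conj (y k) * ρ k := by
  simp only [map_sum, map_mul, Complex.conj_ofReal, Finset.sum_mul_sum]
  rw [Finset.sum_comm]
  refine Finset.sum_congr rfl fun k _ => ?_
  rw [Finset.sum_comm]
  calc _ = ∑ j, x k * conj (y j) * ((∑ i, φ k i * φ j i : ℝ) : ℂ) :=
        Finset.sum_congr rfl fun j _ => by
          push_cast
          rw [Finset.mul_sum]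
          exact Finset.sum_congr rfl fun i _ => by ring
    _ = _ := by simp [horth, apply_ite]

theorem connecting_operator_properties_general
    (N : ℕ) (T : ℝ) (hT : 0 < T)
    (lam : Fin N → ℝ) (hlam : Function.Injective lam)
    (phiv : Fin N → Fin N → ℝ)
    (rho : Fin N → ℝ) (hrhopos : ∀ k, 0 < rho k)
    (horth : ∀ j k : Fin N,
      ∑ i : Fin N, phiv j i * phiv k i = if j = k then rho k else 0)
    (W : (ℝ → ℂ) → (Fin N → ℂ))
    (hW : ∀ f : ℝ → ℂ,
      W f = fun i => ∑ k : Fin N,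
        (1 / (rho k : ℂ)) * (∫ τ in (0:ℝ)..T, (S (T - τ) (lam k) : ℂ) * f τ)
          * (phiv k i : ℂ))
    (Cop : (ℝ → ℂ) → (ℝ → ℂ))
    (hC : ∀ (f : ℝ → ℂ) (t : ℝ),
      Cop f t = ∫ s in (0:ℝ)..T,
        (∑ k : Fin N,
          (1 / (rho k : ℂ)) * (S (T - t) (lam k) : ℂ) * (S (T - s) (lam k) : ℂ))
          * f s) :
    (∀ f g : ℝ → ℂ, Continuous f → Continuous g →
        (∫ t in (0:ℝ)..T, Cop f t * (starRingEnd ℂ) (g t))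
          = ∑ i : Fin N, W f i * (starRingEnd ℂ) (W g i)) ∧
      (∀ f : ℝ → ℂ, Continuous f →
        ∃ r : ℝ, 0 ≤ r ∧
          (∫ t in (0:ℝ)..T, Cop f t * (starRingEnd ℂ) (f t)) = (r : ℂ)) ∧
      (∀ f g : ℝ → ℂ, Continuous f → Continuous g →
        (∫ t in (0:ℝ)..T, Cop f t * (starRingEnd ℂ) (g t))
          = (starRingEnd ℂ) (∫ t in (0:ℝ)..T, Cop g t * (starRingEnd ℂ) (f t))) ∧
      (∀ f : ℝ → ℂ, Continuous f →
        Cop f ∈ Submodule.span ℂ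
          (Set.range fun k : Fin N => fun t : ℝ => (S (T - t) (lam k) : ℂ))) ∧
      (∀ h ∈ Submodule.span ℂ
          (Set.range fun k : Fin N => fun t : ℝ => (S (T - t) (lam k) : ℂ)),
        ∃ f : ℝ → ℂ, Continuous f ∧ Cop f = h) := by
  let u : Fin N → ℝ → ℝ := fun k t => S (T - t) (lam k)
  have hu : ∀ k, Continuous (u k) := fun k => (continuous_S _).comp (continuous_sub_left T)
  have hCop : ∀ f, Continuous f → Cop f = fun t =>
      ∑ k, 1 / (rho k : ℂ) * (∫ s in (0:ℝ)..T, (u k s : ℂ) * f s) * u k t :=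
    fun f hf => funext fun t => (hC f t).trans (integral_sum_kernel_mul hu _ hf t)
  have hinner : ∀ f g : ℝ → ℂ, Continuous f → Continuous g →
      (∫ t in (0:ℝ)..T, Cop f t * conj (g t)) = ∑ i, W f i * conj (W g i) := by
    intro f g hf hg
    rw [hCop f hf, integral_sum_mul_mul_conj hu _ hg, hW, hW,
      sum_sum_mul_mul_conj_sum_of_orthogonal horth]
    refine Finset.sum_congr rfl fun k _ => ?_
    have hρ := (hrhopos k).ne'
    simp only [map_mul, map_div₀, map_one, Complex.conj_ofReal]
    field_simp
    rfl
  refine ⟨hinner, fun f hf => ⟨∑ i, Complex.normSq (W f i),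
    Finset.sum_nonneg fun i _ => Complex.normSq_nonneg _, ?_⟩, fun f g hf hg => ?_,
    fun f hf => ?_, fun h hh => ?_⟩
  · simp [hinner f f hf hf, Complex.mul_conj]
  · rw [hinner f g hf hg, hinner g f hg hf, map_sum]
    simp [mul_comm]
  · rw [hCop f hf]
    exact (Submodule.mem_span_range_iff_exists_fun ℂ).2
      ⟨_, funext fun t => Finset.sum_apply _ _ _⟩
  · obtain ⟨c, rfl⟩ := (Submodule.mem_span_range_iff_exists_fun ℂ).1 hh
    obtain ⟨b, hb⟩ := exists_integral_mul_sum_eq hT hu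
      (fun c hc => eq_zero_of_sum_mul_S_sub_eq_zero hlam hT hc) (fun k => rho k * c k)
    refine ⟨fun t => ∑ j, b j * u j t, by fun_prop, ?_⟩
    rw [hCop _ (by fun_prop)]
    funext t
    simp only [hb, Finset.sum_apply]
    refine Finset.sum_congr rfl fun k _ => ?_
    rw [one_div, inv_mul_cancel_left₀ (Complex.ofReal_ne_zero.2 (hrhopos k).ne')]
    rfl

/-- the connecting operator `C^T` (the integral operator with
kernel `∑ₖ Sₖ(T-t)Sₖ(T-s)/ρₖ`) satisfies
`⟨C^T f, g⟩_{L²(0,T)} = ⟨u^f(T), u^g(T)⟩_{ℂ^N}` for all controls `f, g`; it is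
nonnegative and self-adjoint, and its range is `F₁^T = span{Sₖ(T-·)}`. -/
theorem connecting_operator_properties
    (N : ℕ) (hN : 0 < N) (T : ℝ) (hT : 0 < T)
    (lam : Fin N → ℝ) (hlam : Function.Injective lam)
    (phiv : Fin N → Fin N → ℝ)
    (rho : Fin N → ℝ) (hrhopos : ∀ k, 0 < rho k)
    (horth : ∀ j k : Fin N,
      ∑ i : Fin N, phiv j i * phiv k i = if j = k then rho k else 0)
    (W : (ℝ → ℂ) → (Fin N → ℂ))
    (hW : ∀ f : ℝ → ℂ,
      W f = fun i => ∑ k : Fin N,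
        (1 / (rho k : ℂ)) * (∫ τ in (0:ℝ)..T, (S (T - τ) (lam k) : ℂ) * f τ)
          * (phiv k i : ℂ))
    (Cop : (ℝ → ℂ) → (ℝ → ℂ))
    (hC : ∀ (f : ℝ → ℂ) (t : ℝ),
      Cop f t = ∫ s in (0:ℝ)..T,
        (∑ k : Fin N,
          (1 / (rho k : ℂ)) * (S (T - t) (lam k) : ℂ) * (S (T - s) (lam k) : ℂ))
          * f s) :
    (∀ f g : ℝ → ℂ, Continuous f → Continuous g →
        (∫ t in (0:ℝ)..T, Cop f t * (starRingEnd ℂ) (g t))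
          = ∑ i : Fin N, W f i * (starRingEnd ℂ) (W g i)) ∧
      (∀ f : ℝ → ℂ, Continuous f →
        ∃ r : ℝ, 0 ≤ r ∧
          (∫ t in (0:ℝ)..T, Cop f t * (starRingEnd ℂ) (f t)) = (r : ℂ)) ∧
      (∀ f g : ℝ → ℂ, Continuous f → Continuous g →
        (∫ t in (0:ℝ)..T, Cop f t * (starRingEnd ℂ) (g t))
          = (starRingEnd ℂ) (∫ t in (0:ℝ)..T, Cop g t * (starRingEnd ℂ) (f t))) ∧
      (∀ f : ℝ → ℂ, Continuous f →
        Cop f ∈ Submodule.span ℂ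
          (Set.range fun k : Fin N => fun t : ℝ => (S (T - t) (lam k) : ℂ))) ∧
      (∀ h ∈ Submodule.span ℂ
          (Set.range fun k : Fin N => fun t : ℝ => (S (T - t) (lam k) : ℂ)),
        ∃ f : ℝ → ℂ, Continuous f ∧ Cop f = h) :=
  connecting_operator_properties_general N T hT lam hlam phiv rho hrhopos horth W hW Cop hC
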